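/- For d > 0 and w > 0, the collision probability with random offset satisfies the closed form: P_{w,q} = 2Φ(w/√d) - 1 - (2/(√(2π) w/√d)) + (2/(w/√d)) φ(w/√d), where φ and Φ are the standard normal pdf and cdf. That is, ∫_0^w (2/√d) φ(t/√d)(1 - t/w) dt = 2Φ(w/√d) - 1 - √(2/π)·(√d/w) + (2√d/w) φ(w/√d). -/

import Mathlib

open MeasureTheory ProbabilityTheory Real Set

/-- Standard normal density. -/
noncomputable def stdPdf (x : ℝ) : ℝ := (Real.sqrt (2 * Real.pi))⁻¹ * Real.exp (-x ^ 2 / 2)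

/-- Standard normal CDF. -/
noncomputable def Phi (x : ℝ) : ℝ := ∫ t in Set.Iic x, stdPdf t

/-!
The integrand is the derivative of `t ↦ 2 Φ(t/s) + (2s/w) φ(t/s)` with `s = √d`, because
`φ' x = -x φ x`. The fundamental theorem of calculus on `[0, w]` together with `Φ 0 = 1/2` and
`φ 0 = 1/√(2π)` gives the closed form.
-/

lemma stdPdf_neg (x : ℝ) : stdPdf (-x) = stdPdf x := by
  simp only [stdPdf, neg_sq]

lemma stdPdf_zero : stdPdf 0 = (√(2 * π))⁻¹ := by
  simp [stdPdf]

lemma continuous_stdPdf : Continuous stdPdf := by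
  unfold stdPdf; fun_prop

lemma integrable_stdPdf : Integrable stdPdf := by
  refine ((integrable_exp_neg_mul_sq (by norm_num : (0 : ℝ) < 1 / 2)).const_mul
    (√(2 * π))⁻¹).congr (.of_forall fun x => ?_)
  simp only [stdPdf]
  ring_nf

lemma hasDerivAt_stdPdf (x : ℝ) : HasDerivAt stdPdf (-x * stdPdf x) x := by
  have hexp : HasDerivAt (fun y : ℝ => -y ^ 2 / 2) (-x) x := by
    refine (((hasDerivAt_pow 2 x).neg).div_const 2).congr_deriv ?_
    ring
  refine (hexp.exp.const_mul (√(2 * π))⁻¹).congr_deriv ?_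
  simp only [stdPdf]
  ring

lemma Phi_sub_Phi (a b : ℝ) : Phi b - Phi a = ∫ t in a..b, stdPdf t :=
  intervalIntegral.integral_Iic_sub_Iic integrable_stdPdf.integrableOn
    integrable_stdPdf.integrableOn

lemma hasDerivAt_Phi (x : ℝ) : HasDerivAt Phi (stdPdf x) x := by
  have hFTC : HasDerivAt (fun y => Phi 0 + ∫ t in (0 : ℝ)..y, stdPdf t) (stdPdf x) x :=
    (intervalIntegral.integral_hasDerivAt_right (continuous_stdPdf.intervalIntegrable 0 x)
      continuous_stdPdf.stronglyMeasurable.stronglyMeasurableAtFilter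
      continuous_stdPdf.continuousAt).const_add (Phi 0)
  refine hFTC.congr_of_eventuallyEq (.of_forall fun y => ?_)
  simp only [← Phi_sub_Phi, add_sub_cancel]

lemma Phi_zero : Phi 0 = 1 / 2 := by
  have hIic : Phi 0 = ∫ t in Ioi (0 : ℝ), stdPdf t := by
    rw [Phi, ← neg_zero, ← integral_comp_neg_Iic, neg_zero]
    simp only [stdPdf_neg]
  have hIoi : ∫ t in Ioi (0 : ℝ), stdPdf t
      = (√(2 * π))⁻¹ * ∫ t in Ioi (0 : ℝ), exp (-(1 / 2) * t ^ 2) := by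
    rw [← integral_const_mul]
    refine setIntegral_congr_fun measurableSet_Ioi fun t _ => ?_
    simp only [stdPdf]
    ring_nf
  rw [hIic, hIoi, integral_gaussian_Ioi, show π / (1 / 2) = 2 * π by ring]
  have : √(2 * π) ≠ 0 := by positivity
  field_simp

lemma sqrt_two_div_pi : √(2 / π) = 2 / √(2 * π) := by
  rw [eq_div_iff (by positivity), ← sqrt_mul (by positivity),
    show 2 / π * (2 * π) = 2 ^ 2 by field_simp, sqrt_sq zero_le_two]

lemma hasDerivAt_collision_antideriv {s : ℝ} (hs : s ≠ 0) (w t : ℝ) :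
    HasDerivAt (fun t => 2 * Phi (t / s) + 2 * s / w * stdPdf (t / s))
      (2 / s * stdPdf (t / s) * (1 - t / w)) t := by
  have hdiv : HasDerivAt (fun y : ℝ => y / s) (1 / s) t := by
    simpa using (hasDerivAt_id t).div_const s
  refine ((((hasDerivAt_Phi _).comp t hdiv).const_mul 2).add
    (((hasDerivAt_stdPdf _).comp t hdiv).const_mul (2 * s / w))).congr_deriv ?_
  field_simp
  ring

lemma integral_collision_integrand {s : ℝ} (hs : s ≠ 0) (w a b : ℝ) :
    ∫ t in a..b, 2 / s * stdPdf (t / s) * (1 - t / w)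
      = (2 * Phi (b / s) + 2 * s / w * stdPdf (b / s))
        - (2 * Phi (a / s) + 2 * s / w * stdPdf (a / s)) :=
  intervalIntegral.integral_eq_sub_of_hasDerivAt
    (fun t _ => hasDerivAt_collision_antideriv hs w t)
    (Continuous.intervalIntegrable (by have := continuous_stdPdf; fun_prop) a b)

/-- Closed form of the random-offset collision probability. -/
theorem stmt4 (d w : ℝ) (hd : 0 < d) (hw : 0 < w) :
    ∫ t in Set.Ioc (0 : ℝ) w,
        (2 / Real.sqrt d) * stdPdf (t / Real.sqrt d) * (1 - t / w)
      = 2 * Phi (w / Real.sqrt d) - 1 - Real.sqrt (2 / Real.pi) * (Real.sqrt d / w)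
        + (2 * Real.sqrt d / w) * stdPdf (w / Real.sqrt d) := by
  have hs : √d ≠ 0 := (sqrt_pos.mpr hd).ne'
  rw [← intervalIntegral.integral_of_le hw.le, integral_collision_integrand hs,
    zero_div, Phi_zero, stdPdf_zero, sqrt_two_div_pi]
  ring
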